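/- arXiv:2510.25394 — 2 statements merged into one kernel-verified Lean document; each statement's English description precedes it below -/
import Mathlib

section
/- The weakening rules are admissible in G(K_n): if Γ ⇒ Δ is derivable then Γ ⇒ Δ, C is derivable and C, Γ ⇒ Δ is derivable, for any formula C. -/
namespace UIP

/-- Multi-agent modal formulas over agent type `α`, with variables, `⊥`,
`∧`, `∨`, `→`, `¬`, and a box `□_i` for each agent `i`. -/
inductive Formula (α : Type) : Type where
  | var : ℕ → Formula α
  | bot : Formula α
  | and : Formula α → Formula α → Formula α
  | or  : Formula α → Formula α → Formula α
  | imp : Formula α → Formula α → Formula α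
  | neg : Formula α → Formula α
  | box : α → Formula α → Formula α
  deriving DecidableEq

namespace Formula

variable {α : Type}

/-- The weight of a formula. -/
def weight : Formula α → ℕ
  | var _ => 1
  | bot => 1
  | and A B => weight A + weight B + 1
  | or A B => weight A + weight B + 1
  | imp A B => weight A + weight B + 1
  | neg A => weight A + 1
  | box _ A => weight A + 1

/-- The set of propositional variables occurring in a formula. -/
def vars : Formula α → Finset ℕ
  | var p => {p}
  | bot => ∅
  | and A B => vars A ∪ vars B
  | or A B => vars A ∪ vars B
  | imp A B => vars A ∪ vars B
  | neg A => vars A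
  | box _ A => vars A

/-- A formula is atomic iff it is a propositional variable or `⊥`. -/
def isAtomic : Formula α → Prop
  | var _ => True
  | bot => True
  | _ => False

/-- A formula is outermost-boxed. -/
def isBoxed : Formula α → Prop
  | box _ _ => True
  | _ => False

/-- A formula is outermost-boxed with a modality different from `□_i`. -/
def isBoxedNe (i : α) : Formula α → Prop
  | box j _ => j ≠ i
  | _ => False

/-- Substitution of the formula `B` for the variable `q`. -/
def subst (q : ℕ) (B : Formula α) : Formula α → Formula α
  | var p => if p = q then B else var p
  | bot => bot
  | and A C => and (subst q B A) (subst q B C)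
  | or A C => or (subst q B A) (subst q B C)
  | imp A C => imp (subst q B A) (subst q B C)
  | neg A => neg (subst q B A)
  | box i A => box i (subst q B A)

/-- The set of boxed subformulas of a formula. -/
def boxedSubs [DecidableEq α] : Formula α → Finset (Formula α)
  | var _ => ∅
  | bot => ∅
  | and A B => boxedSubs A ∪ boxedSubs B
  | or A B => boxedSubs A ∪ boxedSubs B
  | imp A B => boxedSubs A ∪ boxedSubs B
  | neg A => boxedSubs A
  | box i A => insert (box i A) (boxedSubs A)

/-- Boolean evaluation of a formula under a valuation treating variables and
outermost-boxed formulas as atoms (used to define classical tautologies). -/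
def evalB (v : Formula α → Bool) : Formula α → Bool
  | var p => v (var p)
  | bot => false
  | and A B => evalB v A && evalB v B
  | or A B => evalB v A || evalB v B
  | imp A B => !evalB v A || evalB v B
  | neg A => !evalB v A
  | box i A => v (box i A)

end Formula

/-- A classical propositional tautology (boxed formulas treated as atoms). -/
def Tautology {α : Type} (A : Formula α) : Prop :=
  ∀ v : Formula α → Bool, A.evalB v = true

/-- The set of propositional variables occurring in a multiset of formulas. -/
def mVars {α : Type} (Γ : Multiset (Formula α)) : Finset ℕ :=
  (Γ.map Formula.vars).sup

/-- The total weight of a multiset of formulas. -/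
def mWt {α : Type} (Γ : Multiset (Formula α)) : ℕ :=
  (Γ.map Formula.weight).sum

/-- The number of boxed subformulas of the set underlying a multiset
(counted without multiplicity). -/
def bCount {α : Type} [DecidableEq α] (Γ : Multiset (Formula α)) : ℕ :=
  (Γ.toFinset.sup Formula.boxedSubs).card

/-- Hilbert systems `H(K_n)` (`d = t = false`), `H(KD_n)` (`d = true`) and
`H(KT_n)` (`t = true`): all classical tautologies, the K axiom, optionally
seriality `¬□_i ⊥` / reflexivity `□_i A → A`, modus ponens, necessitation. -/
inductive Hil {α : Type} (d t : Bool) : Formula α → Prop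
  | taut {A : Formula α} : Tautology A → Hil d t A
  | axK (i : α) (A B : Formula α) :
      Hil d t (((A.imp B).box i).imp ((A.box i).imp (B.box i)))
  | axD (i : α) : d = true → Hil d t ((Formula.bot.box i).neg)
  | axT (i : α) (A : Formula α) : t = true → Hil d t ((A.box i).imp A)
  | mp {A B : Formula α} : Hil d t (A.imp B) → Hil d t A → Hil d t B
  | nec (i : α) {A : Formula α} : Hil d t A → Hil d t (A.box i)

/-- The sequent calculi `G(K_n)` (`d = t = false`), `G(KD_n)` (`d = true`),
`G(KT_n)` (`t = true`) on sequents of finite multisets. -/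
inductive G {α : Type} (d t : Bool) :
    Multiset (Formula α) → Multiset (Formula α) → Prop
  | axId (p : ℕ) (Γ Δ : Multiset (Formula α)) :
      G d t (Formula.var p ::ₘ Γ) (Formula.var p ::ₘ Δ)
  | axBot (Γ Δ : Multiset (Formula α)) : G d t (Formula.bot ::ₘ Γ) Δ
  | andR {Γ Δ : Multiset (Formula α)} {A B : Formula α} :
      G d t Γ (A ::ₘ Δ) → G d t Γ (B ::ₘ Δ) → G d t Γ (A.and B ::ₘ Δ)
  | andL {Γ Δ : Multiset (Formula α)} {A B : Formula α} :
      G d t (A ::ₘ B ::ₘ Γ) Δ → G d t (A.and B ::ₘ Γ) Δ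
  | orR {Γ Δ : Multiset (Formula α)} {A B : Formula α} :
      G d t Γ (A ::ₘ B ::ₘ Δ) → G d t Γ (A.or B ::ₘ Δ)
  | orL {Γ Δ : Multiset (Formula α)} {A B : Formula α} :
      G d t (A ::ₘ Γ) Δ → G d t (B ::ₘ Γ) Δ → G d t (A.or B ::ₘ Γ) Δ
  | impR {Γ Δ : Multiset (Formula α)} {A B : Formula α} :
      G d t (A ::ₘ Γ) (B ::ₘ Δ) → G d t Γ (A.imp B ::ₘ Δ)
  | impL {Γ Δ : Multiset (Formula α)} {A B : Formula α} :
      G d t Γ (A ::ₘ Δ) → G d t (B ::ₘ Γ) Δ → G d t (A.imp B ::ₘ Γ) Δ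
  | negR {Γ Δ : Multiset (Formula α)} {A : Formula α} :
      G d t (A ::ₘ Γ) Δ → G d t Γ (A.neg ::ₘ Δ)
  | negL {Γ Δ : Multiset (Formula α)} {A : Formula α} :
      G d t Γ (A ::ₘ Δ) → G d t (A.neg ::ₘ Γ) Δ
  | boxK (i : α) {Γ : Multiset (Formula α)} {A : Formula α}
      (Sg Ω : Multiset (Formula α)) :
      (∀ C ∈ Sg, C.isAtomic ∨ C.isBoxedNe i) →
      (∀ C ∈ Ω, C.isAtomic ∨ C.isBoxed) →
      G d t Γ {A} →
      G d t (Sg + Γ.map (Formula.box i)) (Formula.box i A ::ₘ Ω)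
  | boxD (i : α) {Γ : Multiset (Formula α)} (Sg Ω : Multiset (Formula α)) :
      d = true → Γ ≠ 0 →
      (∀ C ∈ Sg, C.isAtomic ∨ C.isBoxedNe i) →
      (∀ C ∈ Ω, C.isAtomic ∨ C.isBoxed) →
      G d t Γ 0 →
      G d t (Sg + Γ.map (Formula.box i)) Ω
  | boxT (i : α) {Γ Δ : Multiset (Formula α)} {A : Formula α} :
      t = true →
      G d t (Formula.box i A ::ₘ A ::ₘ Γ) Δ →
      G d t (Formula.box i A ::ₘ Γ) Δ

/-- Height-indexed version of `G(K_n)`: `GH n Γ Δ` means `Γ ⇒ Δ` has a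
derivation of height at most `n` (initial sequents at every height,
each rule adds one to the height). -/
inductive GH {α : Type} : ℕ → Multiset (Formula α) → Multiset (Formula α) → Prop
  | axId (n : ℕ) (p : ℕ) (Γ Δ : Multiset (Formula α)) :
      GH n (Formula.var p ::ₘ Γ) (Formula.var p ::ₘ Δ)
  | axBot (n : ℕ) (Γ Δ : Multiset (Formula α)) : GH n (Formula.bot ::ₘ Γ) Δ
  | andR {n : ℕ} {Γ Δ : Multiset (Formula α)} {A B : Formula α} :
      GH n Γ (A ::ₘ Δ) → GH n Γ (B ::ₘ Δ) → GH (n + 1) Γ (A.and B ::ₘ Δ)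
  | andL {n : ℕ} {Γ Δ : Multiset (Formula α)} {A B : Formula α} :
      GH n (A ::ₘ B ::ₘ Γ) Δ → GH (n + 1) (A.and B ::ₘ Γ) Δ
  | orR {n : ℕ} {Γ Δ : Multiset (Formula α)} {A B : Formula α} :
      GH n Γ (A ::ₘ B ::ₘ Δ) → GH (n + 1) Γ (A.or B ::ₘ Δ)
  | orL {n : ℕ} {Γ Δ : Multiset (Formula α)} {A B : Formula α} :
      GH n (A ::ₘ Γ) Δ → GH n (B ::ₘ Γ) Δ → GH (n + 1) (A.or B ::ₘ Γ) Δ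
  | impR {n : ℕ} {Γ Δ : Multiset (Formula α)} {A B : Formula α} :
      GH n (A ::ₘ Γ) (B ::ₘ Δ) → GH (n + 1) Γ (A.imp B ::ₘ Δ)
  | impL {n : ℕ} {Γ Δ : Multiset (Formula α)} {A B : Formula α} :
      GH n Γ (A ::ₘ Δ) → GH n (B ::ₘ Γ) Δ → GH (n + 1) (A.imp B ::ₘ Γ) Δ
  | negR {n : ℕ} {Γ Δ : Multiset (Formula α)} {A : Formula α} :
      GH n (A ::ₘ Γ) Δ → GH (n + 1) Γ (A.neg ::ₘ Δ)
  | negL {n : ℕ} {Γ Δ : Multiset (Formula α)} {A : Formula α} :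
      GH n Γ (A ::ₘ Δ) → GH (n + 1) (A.neg ::ₘ Γ) Δ
  | boxK {n : ℕ} (i : α) {Γ : Multiset (Formula α)} {A : Formula α}
      (Sg Ω : Multiset (Formula α)) :
      (∀ C ∈ Sg, C.isAtomic ∨ C.isBoxedNe i) →
      (∀ C ∈ Ω, C.isAtomic ∨ C.isBoxed) →
      GH n Γ {A} →
      GH (n + 1) (Sg + Γ.map (Formula.box i)) (Formula.box i A ::ₘ Ω)

/-- The premise-of relation for backward proof-search in `G(K_n)`:
`GKPrem S S'` holds iff `S` is a premise of a rule instance of `G(K_n)`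
with conclusion `S'`. -/
inductive GKPrem {α : Type} :
    Multiset (Formula α) × Multiset (Formula α) →
    Multiset (Formula α) × Multiset (Formula α) → Prop
  | andR1 (Γ Δ : Multiset (Formula α)) (A B : Formula α) :
      GKPrem (Γ, A ::ₘ Δ) (Γ, A.and B ::ₘ Δ)
  | andR2 (Γ Δ : Multiset (Formula α)) (A B : Formula α) :
      GKPrem (Γ, B ::ₘ Δ) (Γ, A.and B ::ₘ Δ)
  | andL (Γ Δ : Multiset (Formula α)) (A B : Formula α) :
      GKPrem (A ::ₘ B ::ₘ Γ, Δ) (A.and B ::ₘ Γ, Δ)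
  | orR (Γ Δ : Multiset (Formula α)) (A B : Formula α) :
      GKPrem (Γ, A ::ₘ B ::ₘ Δ) (Γ, A.or B ::ₘ Δ)
  | orL1 (Γ Δ : Multiset (Formula α)) (A B : Formula α) :
      GKPrem (A ::ₘ Γ, Δ) (A.or B ::ₘ Γ, Δ)
  | orL2 (Γ Δ : Multiset (Formula α)) (A B : Formula α) :
      GKPrem (B ::ₘ Γ, Δ) (A.or B ::ₘ Γ, Δ)
  | impR (Γ Δ : Multiset (Formula α)) (A B : Formula α) :
      GKPrem (A ::ₘ Γ, B ::ₘ Δ) (Γ, A.imp B ::ₘ Δ)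
  | impL1 (Γ Δ : Multiset (Formula α)) (A B : Formula α) :
      GKPrem (Γ, A ::ₘ Δ) (A.imp B ::ₘ Γ, Δ)
  | impL2 (Γ Δ : Multiset (Formula α)) (A B : Formula α) :
      GKPrem (B ::ₘ Γ, Δ) (A.imp B ::ₘ Γ, Δ)
  | negR (Γ Δ : Multiset (Formula α)) (A : Formula α) :
      GKPrem (A ::ₘ Γ, Δ) (Γ, A.neg ::ₘ Δ)
  | negL (Γ Δ : Multiset (Formula α)) (A : Formula α) :
      GKPrem (Γ, A ::ₘ Δ) (A.neg ::ₘ Γ, Δ)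
  | boxK (i : α) (Γ : Multiset (Formula α)) (A : Formula α)
      (Sg Ω : Multiset (Formula α)) :
      (∀ C ∈ Sg, C.isAtomic ∨ C.isBoxedNe i) →
      (∀ C ∈ Ω, C.isAtomic ∨ C.isBoxed) →
      GKPrem (Γ, {A}) (Sg + Γ.map (Formula.box i), Formula.box i A ::ₘ Ω)

/-- The sequent calculus `G(KT_n⁺)` on T-sequents `Σ | Γ ⇒ Δ`. -/
inductive GT {α : Type} :
    Multiset (Formula α) → Multiset (Formula α) → Multiset (Formula α) → Prop
  | axId (Sg : Multiset (Formula α)) (p : ℕ) (Γ Δ : Multiset (Formula α)) :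
      GT Sg (Formula.var p ::ₘ Γ) (Formula.var p ::ₘ Δ)
  | axBot (Sg Γ Δ : Multiset (Formula α)) : GT Sg (Formula.bot ::ₘ Γ) Δ
  | andR {Sg Γ Δ : Multiset (Formula α)} {A B : Formula α} :
      GT Sg Γ (A ::ₘ Δ) → GT Sg Γ (B ::ₘ Δ) → GT Sg Γ (A.and B ::ₘ Δ)
  | andL {Sg Γ Δ : Multiset (Formula α)} {A B : Formula α} :
      GT Sg (A ::ₘ B ::ₘ Γ) Δ → GT Sg (A.and B ::ₘ Γ) Δ
  | orR {Sg Γ Δ : Multiset (Formula α)} {A B : Formula α} :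
      GT Sg Γ (A ::ₘ B ::ₘ Δ) → GT Sg Γ (A.or B ::ₘ Δ)
  | orL {Sg Γ Δ : Multiset (Formula α)} {A B : Formula α} :
      GT Sg (A ::ₘ Γ) Δ → GT Sg (B ::ₘ Γ) Δ → GT Sg (A.or B ::ₘ Γ) Δ
  | impR {Sg Γ Δ : Multiset (Formula α)} {A B : Formula α} :
      GT Sg (A ::ₘ Γ) (B ::ₘ Δ) → GT Sg Γ (A.imp B ::ₘ Δ)
  | impL {Sg Γ Δ : Multiset (Formula α)} {A B : Formula α} :
      GT Sg Γ (A ::ₘ Δ) → GT Sg (B ::ₘ Γ) Δ → GT Sg (A.imp B ::ₘ Γ) Δ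
  | negR {Sg Γ Δ : Multiset (Formula α)} {A : Formula α} :
      GT Sg (A ::ₘ Γ) Δ → GT Sg Γ (A.neg ::ₘ Δ)
  | negL {Sg Γ Δ : Multiset (Formula α)} {A : Formula α} :
      GT Sg Γ (A ::ₘ Δ) → GT Sg (A.neg ::ₘ Γ) Δ
  | boxK (i : α) {Γ : Multiset (Formula α)} {A : Formula α}
      (Sg Pis Ω : Multiset (Formula α)) :
      (∀ C ∈ Sg, C.isBoxedNe i) →
      (∀ C ∈ Pis, C.isAtomic) →
      (∀ C ∈ Ω, C.isAtomic ∨ C.isBoxed) →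
      GT 0 Γ {A} →
      GT (Sg + Γ.map (Formula.box i)) Pis (Formula.box i A ::ₘ Ω)
  | boxT (i : α) {Sg Γ Δ : Multiset (Formula α)} {A : Formula α} :
      GT (Formula.box i A ::ₘ Sg) (A ::ₘ Γ) Δ →
      GT Sg (Formula.box i A ::ₘ Γ) Δ

/-- The premise-of relation for backward proof-search in `G(KT_n⁺)`. -/
inductive TPrem {α : Type} :
    Multiset (Formula α) × Multiset (Formula α) × Multiset (Formula α) →
    Multiset (Formula α) × Multiset (Formula α) × Multiset (Formula α) → Prop
  | andR1 (Sg Γ Δ : Multiset (Formula α)) (A B : Formula α) :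
      TPrem (Sg, Γ, A ::ₘ Δ) (Sg, Γ, A.and B ::ₘ Δ)
  | andR2 (Sg Γ Δ : Multiset (Formula α)) (A B : Formula α) :
      TPrem (Sg, Γ, B ::ₘ Δ) (Sg, Γ, A.and B ::ₘ Δ)
  | andL (Sg Γ Δ : Multiset (Formula α)) (A B : Formula α) :
      TPrem (Sg, A ::ₘ B ::ₘ Γ, Δ) (Sg, A.and B ::ₘ Γ, Δ)
  | orR (Sg Γ Δ : Multiset (Formula α)) (A B : Formula α) :
      TPrem (Sg, Γ, A ::ₘ B ::ₘ Δ) (Sg, Γ, A.or B ::ₘ Δ)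
  | orL1 (Sg Γ Δ : Multiset (Formula α)) (A B : Formula α) :
      TPrem (Sg, A ::ₘ Γ, Δ) (Sg, A.or B ::ₘ Γ, Δ)
  | orL2 (Sg Γ Δ : Multiset (Formula α)) (A B : Formula α) :
      TPrem (Sg, B ::ₘ Γ, Δ) (Sg, A.or B ::ₘ Γ, Δ)
  | impR (Sg Γ Δ : Multiset (Formula α)) (A B : Formula α) :
      TPrem (Sg, A ::ₘ Γ, B ::ₘ Δ) (Sg, Γ, A.imp B ::ₘ Δ)
  | impL1 (Sg Γ Δ : Multiset (Formula α)) (A B : Formula α) :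
      TPrem (Sg, Γ, A ::ₘ Δ) (Sg, A.imp B ::ₘ Γ, Δ)
  | impL2 (Sg Γ Δ : Multiset (Formula α)) (A B : Formula α) :
      TPrem (Sg, B ::ₘ Γ, Δ) (Sg, A.imp B ::ₘ Γ, Δ)
  | negR (Sg Γ Δ : Multiset (Formula α)) (A : Formula α) :
      TPrem (Sg, A ::ₘ Γ, Δ) (Sg, Γ, A.neg ::ₘ Δ)
  | negL (Sg Γ Δ : Multiset (Formula α)) (A : Formula α) :
      TPrem (Sg, Γ, A ::ₘ Δ) (Sg, A.neg ::ₘ Γ, Δ)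
  | boxK (i : α) (Γ : Multiset (Formula α)) (A : Formula α)
      (Sg Pis Ω : Multiset (Formula α)) :
      (∀ C ∈ Sg, C.isBoxedNe i) →
      (∀ C ∈ Pis, C.isAtomic) →
      (∀ C ∈ Ω, C.isAtomic ∨ C.isBoxed) →
      TPrem (0, Γ, {A}) (Sg + Γ.map (Formula.box i), Pis, Formula.box i A ::ₘ Ω)
  | boxT (i : α) (Sg Γ Δ : Multiset (Formula α)) (A : Formula α) :
      TPrem (Formula.box i A ::ₘ Sg, A ::ₘ Γ, Δ) (Sg, Formula.box i A ::ₘ Γ, Δ)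

/-- The termination measure `⟨b(Σ,Γ,Δ), wt(Γ,Δ)⟩` on T-sequents. -/
def tMeasure {α : Type} [DecidableEq α]
    (s : Multiset (Formula α) × Multiset (Formula α) × Multiset (Formula α)) :
    ℕ × ℕ :=
  (bCount (s.1 + s.2.1 + s.2.2), mWt s.2.1 + mWt s.2.2)

end UIP

open UIP Formula


namespace UIP

section WeakAux

variable {α : Type}

private lemma gcast {d t : Bool} {Γ Δ Γ' Δ' : Multiset (Formula α)}
    (h : G d t Γ Δ) (e1 : Γ = Γ') (e2 : Δ = Δ') : G d t Γ' Δ' := e1 ▸ e2 ▸ h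

private lemma exR {d t : Bool} {Γ Δ : Multiset (Formula α)} {X Y : Formula α}
    (h : G d t Γ (X ::ₘ Y ::ₘ Δ)) : G d t Γ (Y ::ₘ X ::ₘ Δ) := by
  rwa [Multiset.cons_swap]

private lemma exL {d t : Bool} {Γ Δ : Multiset (Formula α)} {X Y : Formula α}
    (h : G d t (X ::ₘ Y ::ₘ Γ) Δ) : G d t (Y ::ₘ X ::ₘ Γ) Δ := by
  rwa [Multiset.cons_swap]

private lemma weakAux (C : Formula α)
    (hC : ∀ i : α, C.isAtomic ∨ C.isBoxedNe i ∨
      ∃ B, C = Formula.box i B ∧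
        (∀ Γ Δ, G false false Γ Δ →
          G false false Γ (B ::ₘ Δ) ∧ G false false (B ::ₘ Γ) Δ)) :
    ∀ Γ Δ, G false false Γ Δ →
      G false false Γ (C ::ₘ Δ) ∧ G false false (C ::ₘ Γ) Δ := by
  intro Γ Δ h
  induction h with
  | axId p Γ Δ =>
      exact ⟨exR (G.axId p Γ (C ::ₘ Δ)), exL (G.axId p (C ::ₘ Γ) Δ)⟩
  | axBot Γ Δ =>
      exact ⟨G.axBot Γ (C ::ₘ Δ), exL (G.axBot (C ::ₘ Γ) Δ)⟩
  | andR h1 h2 ih1 ih2 =>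
      exact ⟨exR (G.andR (exR ih1.1) (exR ih2.1)), G.andR ih1.2 ih2.2⟩
  | @andL Γ Δ A B h ih =>
      refine ⟨G.andL ih.1, exL (G.andL ?_)⟩
      exact gcast ih.2
        (show C ::ₘ A ::ₘ B ::ₘ Γ = A ::ₘ B ::ₘ C ::ₘ Γ by
          rw [Multiset.cons_swap C A, Multiset.cons_swap C B]) rfl
  | @orR Γ Δ A B h ih =>
      refine ⟨exR (G.orR ?_), G.orR ih.2⟩
      exact gcast ih.1 rfl
        (show C ::ₘ A ::ₘ B ::ₘ Δ = A ::ₘ B ::ₘ C ::ₘ Δ by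
          rw [Multiset.cons_swap C A, Multiset.cons_swap C B])
  | orL h1 h2 ih1 ih2 =>
      exact ⟨G.orL ih1.1 ih2.1, exL (G.orL (exL ih1.2) (exL ih2.2))⟩
  | impR h ih =>
      exact ⟨exR (G.impR (exR ih.1)), G.impR (exL ih.2)⟩
  | impL h1 h2 ih1 ih2 =>
      exact ⟨G.impL (exR ih1.1) ih2.1, exL (G.impL ih1.2 (exL ih2.2))⟩
  | negR h ih =>
      exact ⟨exR (G.negR ih.1), G.negR (exL ih.2)⟩
  | negL h ih =>
      exact ⟨G.negL (exR ih.1), exL (G.negL ih.2)⟩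
  | @boxK i Γ A Sg Ω hSg hΩ h ih =>
      constructor
      · -- right weakening: put C into Ω
        refine exR (G.boxK i Sg (C ::ₘ Ω) hSg ?_ h)
        intro D hD
        rcases Multiset.mem_cons.mp hD with rfl | hD
        · rcases hC i with h' | h' | ⟨B, rfl, _⟩
          · exact Or.inl h'
          · cases D <;> simp_all [Formula.isBoxed, Formula.isBoxedNe]
          · exact Or.inr trivial
        · exact hΩ D hD
      · -- left weakening
        rcases hC i with h' | h' | ⟨B, rfl, hB⟩
        · refine gcast (G.boxK i (C ::ₘ Sg) Ω ?_ hΩ h) (Multiset.cons_add C Sg _) rfl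
          intro D hD
          rcases Multiset.mem_cons.mp hD with rfl | hD
          · exact Or.inl h'
          · exact hSg D hD
        · refine gcast (G.boxK i (C ::ₘ Sg) Ω ?_ hΩ h) (Multiset.cons_add C Sg _) rfl
          intro D hD
          rcases Multiset.mem_cons.mp hD with rfl | hD
          · exact Or.inr h'
          · exact hSg D hD
        · refine gcast (G.boxK i Sg Ω hSg hΩ (hB Γ {A} h).2) ?_ rfl
          show Sg + Multiset.map (Formula.box i) (B ::ₘ Γ)
              = Formula.box i B ::ₘ (Sg + Multiset.map (Formula.box i) Γ)
          rw [Multiset.map_cons, Multiset.add_cons]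
  | boxD _ _ _ hd _ _ _ _ _ => exact absurd hd (by simp)
  | boxT _ ht _ _ => exact absurd ht (by simp)

private lemma weak (C : Formula α) : ∀ Γ Δ, G false false Γ Δ →
    G false false Γ (C ::ₘ Δ) ∧ G false false (C ::ₘ Γ) Δ := by
  induction C with
  | var p => exact weakAux _ (fun _ => Or.inl trivial)
  | bot => exact weakAux _ (fun _ => Or.inl trivial)
  | and A B ihA ihB =>
      intro Γ Δ h
      refine ⟨G.andR (ihA Γ Δ h).1 (ihB Γ Δ h).1, G.andL (ihA _ _ (ihB Γ Δ h).2).2⟩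
  | or A B ihA ihB =>
      intro Γ Δ h
      exact ⟨G.orR (ihA _ _ (ihB Γ Δ h).1).1, G.orL (ihA Γ Δ h).2 (ihB Γ Δ h).2⟩
  | imp A B ihA ihB =>
      intro Γ Δ h
      exact ⟨G.impR (ihB _ _ (ihA Γ Δ h).2).1, G.impL (ihA Γ Δ h).1 (ihB Γ Δ h).2⟩
  | neg A ihA =>
      intro Γ Δ h
      exact ⟨G.negR (ihA Γ Δ h).2, G.negL (ihA Γ Δ h).1⟩
  | box j B ih =>
      refine weakAux _ (fun i => ?_)
      by_cases hji : j = i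
      · exact Or.inr (Or.inr ⟨B, by rw [hji], ih⟩)
      · exact Or.inr (Or.inl hji)

end WeakAux

end UIP

/-- weakening is admissible in `G(K_n)`. -/
theorem GKn_weakening_admissible {α : Type} [Fintype α]
    (Γ Δ : Multiset (Formula α)) (C : Formula α) (h : G false false Γ Δ) :
    G false false Γ (C ::ₘ Δ) ∧ G false false (C ::ₘ Γ) Δ := by
  exact UIP.weak C Γ Δ h
end

section
/- Backward proof-search in the sequent calculus G(KT_n⁺) always terminates: for every rule instance, each premise is strictly smaller than the conclusion in the well-founded order on T-sequents given by (Σ|Γ ⇒ Δ) ≺ (Σ'|Γ' ⇒ Δ') iff ⟨b(Σ,Γ,Δ), wt(Γ,Δ)⟩ < ⟨b(Σ',Γ',Δ'), wt(Γ',Δ')⟩ lexicographically, where b counts the boxed subformulas of the underlying set of formulas and wt is the formula weight. -/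
open UIP Formula

section Aux

variable {α : Type} [DecidableEq α]

/-- The set of boxed subformulas of a multiset. -/
def bset (Γ : Multiset (Formula α)) : Finset (Formula α) :=
  Γ.toFinset.sup Formula.boxedSubs

lemma bCount_eq (Γ : Multiset (Formula α)) : bCount Γ = (bset Γ).card := rfl

@[simp] lemma bset_zero : bset (0 : Multiset (Formula α)) = ∅ := rfl

@[simp] lemma bset_cons (A : Formula α) (Γ : Multiset (Formula α)) :
    bset (A ::ₘ Γ) = A.boxedSubs ∪ bset Γ := by
  simp [bset, Multiset.toFinset_cons, Finset.sup_insert]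

@[simp] lemma bset_add (Γ Δ : Multiset (Formula α)) :
    bset (Γ + Δ) = bset Γ ∪ bset Δ := by
  simp [bset, Multiset.toFinset_add, Finset.sup_union]

@[simp] lemma bset_singleton (A : Formula α) :
    bset ({A} : Multiset (Formula α)) = A.boxedSubs := by
  simp [bset]

lemma mem_bset {x : Formula α} {Γ : Multiset (Formula α)} :
    x ∈ bset Γ ↔ ∃ C ∈ Γ, x ∈ C.boxedSubs := by
  simp [bset, Finset.mem_sup]

@[simp] lemma mWt_zero : mWt (0 : Multiset (Formula α)) = 0 := rfl

@[simp] lemma mWt_cons (A : Formula α) (Γ : Multiset (Formula α)) :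
    mWt (A ::ₘ Γ) = A.weight + mWt Γ := by
  simp [mWt]

lemma weight_le_of_mem_boxedSubs {x C : Formula α} (h : x ∈ C.boxedSubs) :
    x.weight ≤ C.weight := by
  induction C with
  | var p => simp [Formula.boxedSubs] at h
  | bot => simp [Formula.boxedSubs] at h
  | and A B ihA ihB =>
      simp [Formula.boxedSubs] at h
      rcases h with h | h
      · exact le_trans (ihA h) (by simp [Formula.weight]; omega)
      · exact le_trans (ihB h) (by simp [Formula.weight]; omega)
  | or A B ihA ihB =>
      simp [Formula.boxedSubs] at h
      rcases h with h | h
      · exact le_trans (ihA h) (by simp [Formula.weight]; omega)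
      · exact le_trans (ihB h) (by simp [Formula.weight]; omega)
  | imp A B ihA ihB =>
      simp [Formula.boxedSubs] at h
      rcases h with h | h
      · exact le_trans (ihA h) (by simp [Formula.weight]; omega)
      · exact le_trans (ihB h) (by simp [Formula.weight]; omega)
  | neg A ih =>
      simp [Formula.boxedSubs] at h
      exact le_trans (ih h) (by simp [Formula.weight])
  | box i A ih =>
      simp [Formula.boxedSubs] at h
      rcases h with rfl | h
      · exact le_rfl
      · exact le_trans (ih h) (by simp [Formula.weight])

lemma lex_helper {a b c d : ℕ} (h1 : a ≤ c) (h2 : b < d) :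
    Prod.Lex (· < · : ℕ → ℕ → Prop) (· < ·) (a, b) (c, d) := by
  rcases lt_or_eq_of_le h1 with h | h
  · exact Prod.Lex.left _ _ h
  · subst h; exact Prod.Lex.right _ h2

end Aux

/-- backward proof-search in `G(KT_n⁺)` terminates: every rule
strictly decreases the lexicographic measure `⟨b, wt⟩`, and the premise-of
relation is well-founded. -/
theorem GKTnPlus_backward_proof_search_terminates
    {α : Type} [Fintype α] [DecidableEq α] :
    (∀ s s' : Multiset (Formula α) × Multiset (Formula α) × Multiset (Formula α),
        TPrem s s' →
        Prod.Lex (· < · : ℕ → ℕ → Prop) (· < ·) (tMeasure s) (tMeasure s')) ∧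
    WellFounded (TPrem (α := α)) := by
  have key : ∀ s s' : Multiset (Formula α) × Multiset (Formula α) × Multiset (Formula α),
      TPrem s s' →
      Prod.Lex (· < · : ℕ → ℕ → Prop) (· < ·) (tMeasure s) (tMeasure s') := by
    intro s s' h
    cases h with
    | boxK i Γ A Sg Pis Ω hSg hPis hΩ =>
        -- the `b` component strictly decreases
        apply Prod.Lex.left
        simp only [tMeasure, bCount_eq]
        apply Finset.card_lt_card
        rw [Finset.ssubset_iff_of_subset]
        · -- find an element of the conclusion's bset not in the premise's bset
          obtain ⟨D, hD, hDmax⟩ :=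
            Finset.exists_max_image (A ::ₘ Γ).toFinset Formula.weight
              (by simp)
          rw [Multiset.mem_toFinset, Multiset.mem_cons] at hD
          refine ⟨Formula.box i D, ?_, ?_⟩
          · rw [mem_bset]
            rcases hD with rfl | hD
            · refine ⟨Formula.box i D, ?_, by simp [Formula.boxedSubs]⟩
              simp [Multiset.mem_add, Multiset.mem_cons]
            · refine ⟨Formula.box i D, ?_, by simp [Formula.boxedSubs]⟩
              simp only [Multiset.mem_add, Multiset.mem_cons, Multiset.mem_map]
              exact Or.inl (Or.inl (Or.inr ⟨D, hD, rfl⟩))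
          · intro hmem
            rw [mem_bset] at hmem
            obtain ⟨C, hC, hxC⟩ := hmem
            simp only [Multiset.mem_add, Multiset.mem_singleton,
              Multiset.notMem_zero, false_or] at hC
            have h1 : (Formula.box i D).weight ≤ C.weight :=
              weight_le_of_mem_boxedSubs hxC
            have h2 : C.weight ≤ D.weight := by
              apply hDmax
              rw [Multiset.mem_toFinset, Multiset.mem_cons]
              rcases hC with hC | rfl
              · exact Or.inr hC
              · exact Or.inl rfl
            simp [Formula.weight] at h1
            omega
        · -- premise bset ⊆ conclusion bset
          intro x hx
          rw [mem_bset] at hx ⊢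
          obtain ⟨C, hC, hxC⟩ := hx
          simp only [Multiset.mem_add, Multiset.mem_singleton,
            Multiset.notMem_zero, false_or] at hC
          rcases hC with hC | rfl
          · refine ⟨Formula.box i C, ?_, by simp [Formula.boxedSubs, hxC]⟩
            simp only [Multiset.mem_add, Multiset.mem_cons, Multiset.mem_map]
            exact Or.inl (Or.inl (Or.inr ⟨C, hC, rfl⟩))
          · refine ⟨Formula.box i C, ?_, by simp [Formula.boxedSubs, hxC]⟩
            simp [Multiset.mem_add, Multiset.mem_cons]
    | boxT i Sg Γ Δ A =>
        simp only [tMeasure, bCount_eq]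
        apply lex_helper
        · apply Finset.card_le_card
          intro x hx
          simp only [tMeasure, bset_add, bset_cons, Finset.mem_union,
            Formula.boxedSubs, Finset.mem_insert] at hx ⊢
          tauto
        · simp only [tMeasure, mWt_cons, Formula.weight]
          omega
    | andR1 Sg Γ Δ A B =>
        simp only [tMeasure, bCount_eq]
        apply lex_helper
        · apply Finset.card_le_card
          intro x hx
          simp only [bset_add, bset_cons, Finset.mem_union,
            Formula.boxedSubs] at hx ⊢
          tauto
        · simp only [tMeasure, mWt_cons, Formula.weight]; omega
    | andR2 Sg Γ Δ A B =>
        simp only [tMeasure, bCount_eq]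
        apply lex_helper
        · apply Finset.card_le_card
          intro x hx
          simp only [bset_add, bset_cons, Finset.mem_union,
            Formula.boxedSubs] at hx ⊢
          tauto
        · simp only [tMeasure, mWt_cons, Formula.weight]; omega
    | andL Sg Γ Δ A B =>
        simp only [tMeasure, bCount_eq]
        apply lex_helper
        · apply Finset.card_le_card
          intro x hx
          simp only [bset_add, bset_cons, Finset.mem_union,
            Formula.boxedSubs] at hx ⊢
          tauto
        · simp only [tMeasure, mWt_cons, Formula.weight]; omega
    | orR Sg Γ Δ A B =>
        simp only [tMeasure, bCount_eq]
        apply lex_helper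
        · apply Finset.card_le_card
          intro x hx
          simp only [bset_add, bset_cons, Finset.mem_union,
            Formula.boxedSubs] at hx ⊢
          tauto
        · simp only [tMeasure, mWt_cons, Formula.weight]; omega
    | orL1 Sg Γ Δ A B =>
        simp only [tMeasure, bCount_eq]
        apply lex_helper
        · apply Finset.card_le_card
          intro x hx
          simp only [bset_add, bset_cons, Finset.mem_union,
            Formula.boxedSubs] at hx ⊢
          tauto
        · simp only [tMeasure, mWt_cons, Formula.weight]; omega
    | orL2 Sg Γ Δ A B =>
        simp only [tMeasure, bCount_eq]
        apply lex_helper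
        · apply Finset.card_le_card
          intro x hx
          simp only [bset_add, bset_cons, Finset.mem_union,
            Formula.boxedSubs] at hx ⊢
          tauto
        · simp only [tMeasure, mWt_cons, Formula.weight]; omega
    | impR Sg Γ Δ A B =>
        simp only [tMeasure, bCount_eq]
        apply lex_helper
        · apply Finset.card_le_card
          intro x hx
          simp only [bset_add, bset_cons, Finset.mem_union,
            Formula.boxedSubs] at hx ⊢
          tauto
        · simp only [tMeasure, mWt_cons, Formula.weight]; omega
    | impL1 Sg Γ Δ A B =>
        simp only [tMeasure, bCount_eq]
        apply lex_helper
        · apply Finset.card_le_card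
          intro x hx
          simp only [bset_add, bset_cons, Finset.mem_union,
            Formula.boxedSubs] at hx ⊢
          tauto
        · simp only [tMeasure, mWt_cons, Formula.weight]; omega
    | impL2 Sg Γ Δ A B =>
        simp only [tMeasure, bCount_eq]
        apply lex_helper
        · apply Finset.card_le_card
          intro x hx
          simp only [bset_add, bset_cons, Finset.mem_union,
            Formula.boxedSubs] at hx ⊢
          tauto
        · simp only [tMeasure, mWt_cons, Formula.weight]; omega
    | negR Sg Γ Δ A =>
        simp only [tMeasure, bCount_eq]
        apply lex_helper
        · apply Finset.card_le_card
          intro x hx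
          simp only [bset_add, bset_cons, Finset.mem_union,
            Formula.boxedSubs] at hx ⊢
          tauto
        · simp only [tMeasure, mWt_cons, Formula.weight]; omega
    | negL Sg Γ Δ A =>
        simp only [tMeasure, bCount_eq]
        apply lex_helper
        · apply Finset.card_le_card
          intro x hx
          simp only [bset_add, bset_cons, Finset.mem_union,
            Formula.boxedSubs] at hx ⊢
          tauto
        · simp only [tMeasure, mWt_cons, Formula.weight]; omega
  refine ⟨key, ?_⟩
  have hwf : WellFounded (Prod.Lex (· < · : ℕ → ℕ → Prop) (· < ·)) :=
    WellFounded.prod_lex (wellFounded_lt (α := ℕ)) (wellFounded_lt (α := ℕ))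
  exact Subrelation.wf (fun {s s'} h => key s s' h) (InvImage.wf tMeasure hwf)
end
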